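/- Let ψ : ℝ² → ℝ be invariant under Rot(2π/K) for a positive integer K, and let J be any real-valued functional on functions ℝ² → ℝ. Define the 'reflectional functional' F(θ) = J((ψ + ψ∘Ref(θ))/2). Then F is periodic with period π/K: F(θ + π/K) = F(θ) for all θ. -/
import Mathlib


noncomputable def Rot (α : ℝ) : Matrix (Fin 2) (Fin 2) ℝ :=
  !![Real.cos α, -Real.sin α; Real.sin α, Real.cos α]

noncomputable def Ref (θ : ℝ) : Matrix (Fin 2) (Fin 2) ℝ :=
  !![Real.cos (2*θ), Real.sin (2*θ); Real.sin (2*θ), -Real.cos (2*θ)]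

lemma rot_mul_ref (α θ : ℝ) : Rot α * Ref θ = Ref (θ + α / 2) := by
  have h2 : 2 * (θ + α / 2) = α + 2 * θ := by ring
  ext i j
  fin_cases i <;> fin_cases j <;>
    simp [Rot, Ref, Matrix.mul_apply, Fin.sum_univ_two, h2,
      Real.cos_add, Real.sin_add] <;> ring

theorem reflectional_functional_periodic (ψ : (Fin 2 → ℝ) → ℝ) (K : ℕ) (hK : 1 ≤ K)
    (hrot : (fun v => ψ ((Rot (2 * Real.pi / (K : ℝ))).mulVec v)) = ψ)
    (J : ((Fin 2 → ℝ) → ℝ) → ℝ) :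
    ∀ θ : ℝ,
      (fun θ' => J (fun v => (ψ v + ψ ((Ref θ').mulVec v)) / 2)) (θ + Real.pi / (K : ℝ)) =
      (fun θ' => J (fun v => (ψ v + ψ ((Ref θ').mulVec v)) / 2)) θ := by
  intro θ
  simp only
  congr 1
  funext v
  have hKne : (K : ℝ) ≠ 0 := by positivity
  have hmat : Ref (θ + Real.pi / (K : ℝ)) =
      Rot (2 * Real.pi / (K : ℝ)) * Ref θ := by
    rw [rot_mul_ref]
    field_simp
  have := congrFun hrot ((Ref θ).mulVec v)
  rw [hmat, ← Matrix.mulVec_mulVec] at *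
  simp_all
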